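/- The second Abdelqader–Lake syzygy holds for the Kerr–(anti-)de Sitter black hole: for all real a, m, Λ and all (r, θ) with r² + a²cos²θ > 0, one has I₇ = (6/5)(I₁I₄ + I₂I₃). -/

import Mathlib

noncomputable section

namespace KerrAdS

/-- `ρ² = r² + a² cos²θ` in Boyer–Lindquist coordinates. -/
def rho2 (a r θ : ℝ) : ℝ := r ^ 2 + a ^ 2 * Real.cos θ ^ 2

/-- The complex combination `I₁ + i I₂ = 48 m² (r − i a cos θ)⁶ / ρ¹²`
(the orientation convention `I₁ + iI₂ = 48 Ψ₂²` with `Ψ₂ = −m/(r + i a cos θ)³`). -/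
def Ic (a m r θ : ℝ) : ℂ :=
  48 * (m : ℂ) ^ 2 * ((r : ℂ) - Complex.I * ((a * Real.cos θ : ℝ) : ℂ)) ^ 6 /
    ((rho2 a r θ : ℝ) : ℂ) ^ 6

/-- The Weyl invariant `I₁ = C_{αβγδ} C^{αβγδ}` of the Kerr–(anti-)de Sitter black hole. -/
def I1 (a m r θ : ℝ) : ℝ := (Ic a m r θ).re

/-- The Chern–Pontryagin invariant `I₂ = C*_{αβγδ} C^{αβγδ}`. -/
def I2 (a m r θ : ℝ) : ℝ := (Ic a m r θ).im

/-- `Δ_r = (1 − Λr²/3)(r² + a²) − 2mr`. -/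
def Δr (a m Λ r : ℝ) : ℝ := (1 - Λ * r ^ 2 / 3) * (r ^ 2 + a ^ 2) - 2 * m * r

/-- `Δ_θ = 1 + (a²Λ/3) cos²θ`. -/
def Δθ (a Λ θ : ℝ) : ℝ := 1 + a ^ 2 * Λ / 3 * Real.cos θ ^ 2

/-- The gradient invariant `I₅ = ∇_μ I₁ ∇^μ I₁
  = (Δ_r/ρ²)(∂_r I₁)² + (Δ_θ/ρ²)(∂_θ I₁)²`. -/
def I5 (a m Λ r θ : ℝ) : ℝ :=
  Δr a m Λ r / rho2 a r θ * (deriv (fun r' => I1 a m r' θ) r) ^ 2 +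
    Δθ a Λ θ / rho2 a r θ * (deriv (fun θ' => I1 a m r θ') θ) ^ 2

/-- The gradient invariant `I₆ = ∇_μ I₂ ∇^μ I₂
  = (Δ_r/ρ²)(∂_r I₂)² + (Δ_θ/ρ²)(∂_θ I₂)²`. -/
def I6 (a m Λ r θ : ℝ) : ℝ :=
  Δr a m Λ r / rho2 a r θ * (deriv (fun r' => I2 a m r' θ) r) ^ 2 +
    Δθ a Λ θ / rho2 a r θ * (deriv (fun θ' => I2 a m r θ') θ) ^ 2

/-- The gradient invariant `I₇ = ∇_μ I₁ ∇^μ I₂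
  = (Δ_r/ρ²)(∂_r I₁)(∂_r I₂) + (Δ_θ/ρ²)(∂_θ I₁)(∂_θ I₂)`. -/
def I7 (a m Λ r θ : ℝ) : ℝ :=
  Δr a m Λ r / rho2 a r θ *
      (deriv (fun r' => I1 a m r' θ) r) * (deriv (fun r' => I2 a m r' θ) r) +
    Δθ a Λ θ / rho2 a r θ *
      (deriv (fun θ' => I1 a m r θ') θ) * (deriv (fun θ' => I2 a m r θ') θ)

/-- The ergosurface polynomial
`E = Λa⁴c⁴ − Λa⁴c² − Λa²r² − Λr⁴ + 3a²c² − 6mr + 3r²`, `c = cos θ`. -/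
def E (a m Λ r θ : ℝ) : ℝ :=
  Λ * a ^ 4 * Real.cos θ ^ 4 - Λ * a ^ 4 * Real.cos θ ^ 2 - Λ * a ^ 2 * r ^ 2 - Λ * r ^ 4 +
    3 * a ^ 2 * Real.cos θ ^ 2 - 6 * m * r + 3 * r ^ 2

/-- The differential Weyl invariant `I₃ = ∇_μ C_{αβγδ} ∇^μ C^{αβγδ}`
(explicit closed form). -/
def I3 (a m Λ r θ : ℝ) : ℝ :=
  240 * m ^ 2 / rho2 a r θ ^ 9 *
    (a ^ 4 * Real.cos θ ^ 4 - 4 * a ^ 3 * Real.cos θ ^ 3 * r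
      - 6 * a ^ 2 * Real.cos θ ^ 2 * r ^ 2 + 4 * a * Real.cos θ * r ^ 3 + r ^ 4) *
    (a ^ 4 * Real.cos θ ^ 4 + 4 * a ^ 3 * Real.cos θ ^ 3 * r
      - 6 * a ^ 2 * Real.cos θ ^ 2 * r ^ 2 - 4 * a * Real.cos θ * r ^ 3 + r ^ 4) *
    E a m Λ r θ

/-- The mixed differential Weyl invariant `I₄ = ∇_μ C_{αβγδ} ∇^μ C*^{αβγδ}`
(explicit closed form). -/
def I4 (a m Λ r θ : ℝ) : ℝ :=
  1920 * a * Real.cos θ * r * m ^ 2 / rho2 a r θ ^ 9 * E a m Λ r θ *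
    (a ^ 2 * Real.cos θ ^ 2 - 2 * a * Real.cos θ * r - r ^ 2) *
    (a ^ 2 * Real.cos θ ^ 2 + 2 * a * Real.cos θ * r - r ^ 2) *
    (a ^ 2 * Real.cos θ ^ 2 - r ^ 2)

end KerrAdS

/-!
Write `ζ = r + i a cos θ`. Since `(r − i a cos θ)/ρ² = ζ⁻¹`, the complex invariant is the
holomorphic expression `I₁ + iI₂ = 48 m² ζ⁻⁶`, and likewise `I₃ + iI₄ = 240 m² E ρ⁻² ζ⁻⁸`.
Hence `∂_r(I₁ + iI₂) = w := −288 m² ζ⁻⁷` and `∂_θ(I₁ + iI₂) = −i a sin θ · w`, so both terms of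
`I₇` are multiples of `Re w · Im w = Im (w²)/2`, giving `I₇ = (Δ_r − a² sin²θ Δ_θ) ρ⁻² Im(w²)/2`.
On the other side `I₁I₄ + I₂I₃ = Im((I₁ + iI₂)(I₃ + iI₄))`, a multiple of `Im ζ⁻¹⁴` as well, and the
two sides agree because `E = 3(Δ_r − a² sin²θ Δ_θ)`.
-/

open Complex

theorem Complex.conj_pow_div_normSq_pow (z : ℂ) (n : ℕ) :
    (starRingEnd ℂ) z ^ n / (normSq z : ℂ) ^ n = (z ^ n)⁻¹ := by
  rw [← inv_pow, inv_def, mul_pow, div_eq_mul_inv, ← inv_pow, ofReal_inv]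

theorem HasDerivAt.complex_re {f : ℝ → ℂ} {f' : ℂ} {x : ℝ} (hf : HasDerivAt f f' x) :
    HasDerivAt (fun s => (f s).re) f'.re x :=
  reCLM.hasFDerivAt.comp_hasDerivAt x hf

theorem HasDerivAt.complex_im {f : ℝ → ℂ} {f' : ℂ} {x : ℝ} (hf : HasDerivAt f f' x) :
    HasDerivAt (fun s => (f s).im) f'.im x :=
  imCLM.hasFDerivAt.comp_hasDerivAt x hf

theorem HasDerivAt.const_div_pow {f : ℝ → ℂ} {f' : ℂ} {x : ℝ} (c : ℂ) (n : ℕ)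
    (hf : HasDerivAt f f' x) (hx : f x ≠ 0) :
    HasDerivAt (fun s => c / f s ^ (n + 1)) (-((n + 1) * c) / f x ^ (n + 2) * f') x := by
  refine ((hasDerivAt_const x c).fun_div (hf.fun_pow (n + 1)) (pow_ne_zero _ hx)).congr_deriv ?_
  simp only [zero_mul, zero_sub, add_tsub_cancel_right, Nat.cast_add, Nat.cast_one]
  field_simp
  ring

theorem Complex.re_mul_im (z : ℂ) : z.re * z.im = (z ^ 2).im / 2 := by
  simp only [sq, mul_im]
  ring

namespace KerrAdS

def zeta (a r θ : ℝ) : ℂ := ⟨r, a * Real.cos θ⟩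

theorem zeta_eq (a r θ : ℝ) : zeta a r θ = r + (a * Real.cos θ : ℝ) * I := by
  apply Complex.ext <;>
    simp only [add_re, add_im, mul_re, mul_im, ofReal_re, ofReal_im, I_re, I_im, zeta] <;> ring

theorem normSq_zeta (a r θ : ℝ) : normSq (zeta a r θ) = rho2 a r θ := by
  simp only [zeta, normSq_mk, rho2]
  ring

theorem zeta_ne_zero {a r θ : ℝ} (h : 0 < rho2 a r θ) : zeta a r θ ≠ 0 :=
  normSq_pos.mp (normSq_zeta a r θ ▸ h)

theorem hasDerivAt_zeta_r (a r θ : ℝ) : HasDerivAt (fun r' => zeta a r' θ) 1 r := by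
  simp only [zeta_eq]
  exact (hasDerivAt_id r).ofReal_comp.add_const _

theorem hasDerivAt_zeta_θ (a r θ : ℝ) :
    HasDerivAt (fun θ' => zeta a r θ') (-((a * Real.sin θ : ℝ) * I)) θ := by
  simp only [zeta_eq]
  refine (((Real.hasDerivAt_cos θ).const_mul a).ofReal_comp.mul_const I).const_add _
    |>.congr_deriv ?_
  push_cast
  ring

theorem Ic_eq (a m r θ : ℝ) : Ic a m r θ = 48 * m ^ 2 / zeta a r θ ^ 6 := by
  have hconj : (r : ℂ) - I * ((a * Real.cos θ : ℝ) : ℂ) = (starRingEnd ℂ) (zeta a r θ) := by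
    apply Complex.ext <;>
      simp only [sub_re, sub_im, mul_re, mul_im, ofReal_re, ofReal_im, I_re, I_im, conj_re,
        conj_im, zeta] <;> ring
  rw [Ic, hconj, ← normSq_zeta, mul_div_assoc, conj_pow_div_normSq_pow, div_eq_mul_inv]

theorem I3_add_I4_mul_I (a m Λ r θ : ℝ) :
    (I3 a m Λ r θ : ℂ) + I4 a m Λ r θ * I
      = 240 * m ^ 2 * E a m Λ r θ / rho2 a r θ / zeta a r θ ^ 8 := by
  rw [div_eq_mul_inv _ (zeta a r θ ^ 8), ← conj_pow_div_normSq_pow, normSq_zeta,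
    show 240 * (m : ℂ) ^ 2 * E a m Λ r θ / rho2 a r θ *
        ((starRingEnd ℂ) (zeta a r θ) ^ 8 / (rho2 a r θ : ℂ) ^ 8)
      = ((240 * m ^ 2 * E a m Λ r θ / rho2 a r θ ^ 9 : ℝ) : ℂ) * (starRingEnd ℂ) (zeta a r θ) ^ 8
      by push_cast; ring]
  apply Complex.ext <;>
    simp only [add_re, add_im, mul_re, mul_im, ofReal_re, ofReal_im, I_re, I_im, pow_succ,
      pow_zero, one_re, one_im, conj_re, conj_im, zeta, I3, I4, rho2] <;> ring

theorem hasDerivAt_Ic_r (a m : ℝ) {r θ : ℝ} (hζ : zeta a r θ ≠ 0) :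
    HasDerivAt (fun r' => Ic a m r' θ) (-288 * m ^ 2 / zeta a r θ ^ 7) r := by
  simp only [Ic_eq]
  refine ((hasDerivAt_zeta_r a r θ).const_div_pow (48 * m ^ 2) 5 hζ).congr_deriv ?_
  ring

theorem hasDerivAt_Ic_θ (a m : ℝ) {r θ : ℝ} (hζ : zeta a r θ ≠ 0) :
    HasDerivAt (fun θ' => Ic a m r θ')
      (-288 * m ^ 2 / zeta a r θ ^ 7 * -((a * Real.sin θ : ℝ) * I)) θ := by
  simp only [Ic_eq]
  refine ((hasDerivAt_zeta_θ a r θ).const_div_pow (48 * m ^ 2) 5 hζ).congr_deriv ?_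
  ring

theorem I7_eq (a m Λ : ℝ) {r θ : ℝ} (hζ : zeta a r θ ≠ 0) :
    I7 a m Λ r θ = 41472 * m ^ 4 * (Δr a m Λ r - (a * Real.sin θ) ^ 2 * Δθ a Λ θ)
      / rho2 a r θ * ((zeta a r θ ^ 14)⁻¹).im := by
  set w := -288 * m ^ 2 / zeta a r θ ^ 7
  have d1r : deriv (fun r' => I1 a m r' θ) r = w.re := (hasDerivAt_Ic_r a m hζ).complex_re.deriv
  have d2r : deriv (fun r' => I2 a m r' θ) r = w.im := (hasDerivAt_Ic_r a m hζ).complex_im.deriv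
  have d1θ : deriv (fun θ' => I1 a m r θ') θ = (w * -((a * Real.sin θ : ℝ) * I)).re :=
    (hasDerivAt_Ic_θ a m hζ).complex_re.deriv
  have d2θ : deriv (fun θ' => I2 a m r θ') θ = (w * -((a * Real.sin θ : ℝ) * I)).im :=
    (hasDerivAt_Ic_θ a m hζ).complex_im.deriv
  have hw : w ^ 2 = ((82944 * m ^ 4 : ℝ) : ℂ) * (zeta a r θ ^ 14)⁻¹ := by
    push_cast
    ring
  calc I7 a m Λ r θ
      = (Δr a m Λ r - (a * Real.sin θ) ^ 2 * Δθ a Λ θ) / rho2 a r θ * (w.re * w.im) := by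
        rw [I7, d1r, d2r, d1θ, d2θ]
        simp only [mul_neg, neg_re, neg_im, mul_re, mul_im, ofReal_re, ofReal_im, I_re, I_im]
        ring
    _ = _ := by
        rw [re_mul_im, hw, im_ofReal_mul]
        ring

theorem I1_mul_I4_add_I2_mul_I3 (a m Λ r θ : ℝ) :
    I1 a m r θ * I4 a m Λ r θ + I2 a m r θ * I3 a m Λ r θ
      = 11520 * m ^ 4 * E a m Λ r θ / rho2 a r θ * ((zeta a r θ ^ 14)⁻¹).im := by
  have hprod : Ic a m r θ * (I3 a m Λ r θ + I4 a m Λ r θ * I)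
      = ((11520 * m ^ 4 * E a m Λ r θ / rho2 a r θ : ℝ) : ℂ) * (zeta a r θ ^ 14)⁻¹ := by
    rw [Ic_eq, I3_add_I4_mul_I]
    push_cast
    ring
  calc I1 a m r θ * I4 a m Λ r θ + I2 a m r θ * I3 a m Λ r θ
      = (Ic a m r θ * (I3 a m Λ r θ + I4 a m Λ r θ * I)).im := by simp [I1, I2, mul_im]
    _ = _ := by rw [hprod, im_ofReal_mul]

theorem E_eq_three_mul (a m Λ r θ : ℝ) :
    E a m Λ r θ = 3 * (Δr a m Λ r - (a * Real.sin θ) ^ 2 * Δθ a Λ θ) := by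
  rw [mul_pow, Real.sin_sq, E, Δr, Δθ]
  ring

/-- The second Abdelqader–Lake syzygy
`I₇ = (6/5)(I₁I₄ + I₂I₃)` holds for the Kerr–(anti-)de Sitter black hole. -/
theorem second_syzygy (a m Λ r θ : ℝ) (h : 0 < rho2 a r θ) :
    I7 a m Λ r θ =
      6 / 5 * (I1 a m r θ * I4 a m Λ r θ + I2 a m r θ * I3 a m Λ r θ) := by
  rw [I7_eq a m Λ (zeta_ne_zero h), I1_mul_I4_add_I2_mul_I3, E_eq_three_mul]
  ring

end KerrAdS
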